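/- arXiv:2504.02672 — 5 statements merged into one kernel-verified Lean document; each statement's English description precedes it below -/
import Mathlib

section
/- Let W, W' be subspaces of C^n with dim(W) = dim(W'), with orthogonal projectors P^W and P^{W'}. Then ||P^W - P^{W'}|| = ||P^{W^⊥} P^{W'}||, where W^⊥ is the orthogonal complement of W and the norm is the spectral norm. -/
/-!
Write `P`, `Q` for the projections onto `K`, `L` and `β = ‖(1 - P) Q‖`. The vector
`(P - Q) z = P (1 - Q) z - (1 - P) Q z` splits orthogonally along `K ⊕ Kᗮ`, so
`‖P - Q‖ ≤ β` as soon as `‖P (1 - Q)‖ = ‖(1 - Q) P‖ ≤ β`. On `L` the bound `‖(1 - P) y‖ ≤ β ‖y‖`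
says `‖P y‖² ≥ (1 - β²) ‖y‖²`; when `dim K = dim L` this makes `P : L → K` bijective, and
pairing `x = P y ∈ K` with `y` transfers the bound to `‖Q x‖² ≥ (1 - β²) ‖x‖²` on `K`, that is,
`‖(1 - Q) P‖ ≤ β`. The reverse inequality comes from `(1 - P) Q = -(P - Q) Q`.
-/

open Module
open scoped InnerProductSpace

/-- The orthogonal projector onto a subspace `W` of `ℂⁿ`,
viewed as a continuous linear map on the ambient space. -/
noncomputable def projCLM {n : ℕ} (W : Submodule ℂ (EuclideanSpace ℂ (Fin n))) :
    EuclideanSpace ℂ (Fin n) →L[ℂ] EuclideanSpace ℂ (Fin n) :=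
  W.subtypeL.comp W.orthogonalProjectionOnto

namespace Submodule

variable {𝕜 E : Type*} [RCLike 𝕜] [NormedAddCommGroup E] [InnerProductSpace 𝕜 E]
  {K L : Submodule 𝕜 E}

theorem norm_apply_le_of_mem [L.HasOrthogonalProjection] (A : E →L[𝕜] E) {x : E} (hx : x ∈ L) :
    ‖A x‖ ≤ ‖A * L.starProjection‖ * ‖x‖ := by
  simpa [starProjection_eq_self_iff.mpr hx] using (A * L.starProjection).le_opNorm x

theorem mul_norm_sq_le_norm_starProjection_sq_of_finrank_le [FiniteDimensional 𝕜 K]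
    [FiniteDimensional 𝕜 L] (hKL : finrank 𝕜 K ≤ finrank 𝕜 L) {c : ℝ}
    (hL : ∀ y ∈ L, c * ‖y‖ ^ 2 ≤ ‖K.starProjection y‖ ^ 2) {x : E} (hx : x ∈ K) :
    c * ‖x‖ ^ 2 ≤ ‖L.starProjection x‖ ^ 2 := by
  rcases le_or_gt c 0 with hc | hc
  · exact (mul_nonpos_of_nonpos_of_nonneg hc (sq_nonneg _)).trans (sq_nonneg _)
  let T : L →ₗ[𝕜] K := K.orthogonalProjectionOnto.toLinearMap ∘ₗ L.subtype
  have hT_inj : Function.Injective T := by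
    refine (injective_iff_map_eq_zero T).mpr fun y hy => ?_
    have hPy : K.starProjection y = 0 := congrArg Subtype.val hy
    have := hL y y.2
    rw [hPy, norm_zero, zero_pow two_ne_zero] at this
    simpa using le_antisymm (nonpos_of_mul_nonpos_right this hc) (sq_nonneg ‖(y : E)‖)
  have hT_surj : Function.Surjective T :=
    (LinearMap.injective_iff_surjective_of_finrank_eq_finrank
      (le_antisymm (LinearMap.finrank_le_finrank_of_injective hT_inj) hKL)).mp hT_inj
  obtain ⟨⟨y, hy⟩, hTy⟩ := hT_surj ⟨x, hx⟩
  have hPy : K.starProjection y = x := congrArg Subtype.val hTy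
  -- `⟪Q x, y⟫ = ⟪x, y⟫ = ⟪x, P y⟫ = ‖x‖²`
  have hpair : ⟪L.starProjection x, y⟫_𝕜 = ⟪x, x⟫_𝕜 := by
    rw [inner_starProjection_left_eq_right, starProjection_eq_self_iff.mpr hy,
      ← starProjection_eq_self_iff.mpr hx, inner_starProjection_left_eq_right, hPy,
      starProjection_eq_self_iff.mpr hx]
  have hxy : ‖x‖ ^ 2 ≤ ‖L.starProjection x‖ * ‖y‖ := by
    simpa [hpair, ← sq] using norm_inner_le_norm (𝕜 := 𝕜) (L.starProjection x) y
  have hcy : c * ‖y‖ ^ 2 ≤ ‖x‖ ^ 2 := hPy ▸ hL y hy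
  rcases eq_or_ne x 0 with rfl | hx0
  · simp
  have hx4 : c * ‖x‖ ^ 2 * ‖x‖ ^ 2 ≤ ‖L.starProjection x‖ ^ 2 * ‖x‖ ^ 2 :=
    calc c * ‖x‖ ^ 2 * ‖x‖ ^ 2 = c * (‖x‖ ^ 2) ^ 2 := by ring
      _ ≤ c * (‖L.starProjection x‖ * ‖y‖) ^ 2 := by gcongr
      _ = ‖L.starProjection x‖ ^ 2 * (c * ‖y‖ ^ 2) := by ring
      _ ≤ ‖L.starProjection x‖ ^ 2 * ‖x‖ ^ 2 := by gcongr
  exact le_of_mul_le_mul_right hx4 (by positivity)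

theorem norm_starProjection_orthogonal_mul_le [FiniteDimensional 𝕜 K] [FiniteDimensional 𝕜 L]
    (h : finrank 𝕜 K = finrank 𝕜 L) :
    ‖Lᗮ.starProjection * K.starProjection‖ ≤ ‖Kᗮ.starProjection * L.starProjection‖ := by
  set β := ‖Kᗮ.starProjection * L.starProjection‖
  have hL : ∀ y ∈ L, (1 - β ^ 2) * ‖y‖ ^ 2 ≤ ‖K.starProjection y‖ ^ 2 := fun y hy => by
    have hβy := norm_apply_le_of_mem Kᗮ.starProjection hy
    have := norm_sq_eq_add_norm_sq_starProjection y K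
    nlinarith [norm_nonneg (Kᗮ.starProjection y), mul_self_le_mul_self (by positivity) hβy]
  refine ContinuousLinearMap.opNorm_le_bound _ (norm_nonneg _) fun z => ?_
  set x := K.starProjection z
  have hx : x ∈ K := K.starProjection_apply_mem z
  have hQx := mul_norm_sq_le_norm_starProjection_sq_of_finrank_le h.le hL hx
  have hxz : ‖x‖ ≤ ‖z‖ := K.norm_starProjection_apply_le z
  have := norm_sq_eq_add_norm_sq_starProjection x L
  rw [mul_apply_eq_comp, ← sq_le_sq₀ (norm_nonneg _) (by positivity)]
  nlinarith [mul_self_le_mul_self (norm_nonneg x) hxz, sq_nonneg β]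

theorem norm_starProjection_orthogonal_mul_le_norm_sub [K.HasOrthogonalProjection]
    [L.HasOrthogonalProjection] :
    ‖Kᗮ.starProjection * L.starProjection‖ ≤ ‖K.starProjection - L.starProjection‖ := by
  have hQ := L.isIdempotentElem_starProjection
  have hPQ : Kᗮ.starProjection * L.starProjection =
      -((K.starProjection - L.starProjection) * L.starProjection) := by
    rw [starProjection_orthogonal', sub_mul, sub_mul, hQ.eq, one_mul, neg_sub]
  calc ‖Kᗮ.starProjection * L.starProjection‖
      ≤ ‖K.starProjection - L.starProjection‖ * ‖L.starProjection‖ := by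
        rw [hPQ, norm_neg]; exact norm_mul_le _ _
    _ ≤ ‖K.starProjection - L.starProjection‖ :=
        mul_le_of_le_one_right (norm_nonneg _) L.starProjection_norm_le

variable [CompleteSpace E]

theorem norm_starProjection_mul_starProjection_orthogonal_le [FiniteDimensional 𝕜 K]
    [FiniteDimensional 𝕜 L] (h : finrank 𝕜 K = finrank 𝕜 L) :
    ‖K.starProjection * Lᗮ.starProjection‖ ≤ ‖Kᗮ.starProjection * L.starProjection‖ := by
  have hstar : star (Lᗮ.starProjection * K.starProjection) =
      K.starProjection * Lᗮ.starProjection := by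
    rw [star_mul, (isSelfAdjoint_starProjection K).star_eq,
      (isSelfAdjoint_starProjection Lᗮ).star_eq]
  rw [← hstar]
  exact (norm_star _).trans_le (norm_starProjection_orthogonal_mul_le h)

theorem norm_sub_le_norm_starProjection_orthogonal_mul [FiniteDimensional 𝕜 K]
    [FiniteDimensional 𝕜 L] (h : finrank 𝕜 K = finrank 𝕜 L) :
    ‖K.starProjection - L.starProjection‖ ≤ ‖Kᗮ.starProjection * L.starProjection‖ := by
  have hP := K.isIdempotentElem_starProjection
  have hK : K.starProjection * (K.starProjection - L.starProjection) =
      K.starProjection * Lᗮ.starProjection := by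
    rw [starProjection_orthogonal', mul_sub, mul_sub, hP.eq, mul_one]
  have hKperp : Kᗮ.starProjection * (K.starProjection - L.starProjection) =
      -(Kᗮ.starProjection * L.starProjection) := by
    rw [starProjection_orthogonal', sub_mul, one_mul, mul_sub, hP.eq, sub_mul, one_mul]
    abel
  refine ContinuousLinearMap.opNorm_le_bound _ (norm_nonneg _) fun z => ?_
  have hsplit : ‖(K.starProjection - L.starProjection) z‖ ^ 2 =
      ‖K.starProjection (Lᗮ.starProjection z)‖ ^ 2 +
        ‖Kᗮ.starProjection (L.starProjection z)‖ ^ 2 := by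
    rw [norm_sq_eq_add_norm_sq_starProjection _ K, ← mul_apply_eq_comp K.starProjection,
      ← mul_apply_eq_comp Kᗮ.starProjection, hK, hKperp, neg_apply,
      norm_neg, mul_apply_eq_comp, mul_apply_eq_comp]
  have hu : ‖K.starProjection (Lᗮ.starProjection z)‖ ≤
      ‖Kᗮ.starProjection * L.starProjection‖ * ‖Lᗮ.starProjection z‖ :=
    (norm_apply_le_of_mem _ (Lᗮ.starProjection_apply_mem z)).trans <|
      mul_le_mul_of_nonneg_right (norm_starProjection_mul_starProjection_orthogonal_le h)
        (norm_nonneg _)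
  have hv : ‖Kᗮ.starProjection (L.starProjection z)‖ ≤
      ‖Kᗮ.starProjection * L.starProjection‖ * ‖L.starProjection z‖ :=
    norm_apply_le_of_mem _ (L.starProjection_apply_mem z)
  have hz := norm_sq_eq_add_norm_sq_starProjection z L
  rw [← sq_le_sq₀ (norm_nonneg _) (by positivity), hsplit, mul_pow, hz]
  nlinarith [pow_le_pow_left₀ (norm_nonneg _) hu 2, pow_le_pow_left₀ (norm_nonneg _) hv 2]

theorem norm_starProjection_sub_starProjection [FiniteDimensional 𝕜 K] [FiniteDimensional 𝕜 L]
    (h : finrank 𝕜 K = finrank 𝕜 L) :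
    ‖K.starProjection - L.starProjection‖ = ‖Kᗮ.starProjection * L.starProjection‖ :=
  (norm_sub_le_norm_starProjection_orthogonal_mul h).antisymm
    norm_starProjection_orthogonal_mul_le_norm_sub

end Submodule

/-- If `dim W = dim W'`, then `‖P^W - P^{W'}‖ = ‖P^{W^⊥} P^{W'}‖`. -/
theorem stmt1 {n : ℕ} (W W' : Submodule ℂ (EuclideanSpace ℂ (Fin n)))
    (h : Module.finrank ℂ W = Module.finrank ℂ W') :
    ‖projCLM W - projCLM W'‖ = ‖(projCLM Wᗮ).comp (projCLM W')‖ :=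
  Submodule.norm_starProjection_sub_starProjection h
end

section
/- (Bauer–Fike for Hermitian matrices) Let A be an n×n Hermitian matrix, let u be a unit vector in C^n and λ' a real number. Define the residual r = A u - λ' u. Then there exists an eigenvalue λ of A with |λ - λ'| ≤ ||r||, i.e. min over eigenvalues λ of A of |λ - λ'| is at most the Euclidean norm of r. -/
/-!
Expand `u` in an orthonormal eigenbasis of `A`: the coordinates of `A u - μ u` are those of `u`
multiplied by `λᵢ - μ`, each of modulus at least `minᵢ |λᵢ - μ|`, so by Parseval
`‖A u - μ u‖ ≥ minᵢ |λᵢ - μ| * ‖u‖`.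
-/

open Module End

theorem EuclideanSpace.mul_norm_le_norm_of_forall {𝕜 ι : Type*} [RCLike 𝕜] [Fintype ι]
    {x y : EuclideanSpace 𝕜 ι} {c : ℝ} (hc : 0 ≤ c) (h : ∀ i, c * ‖x i‖ ≤ ‖y i‖) :
    c * ‖x‖ ≤ ‖y‖ := by
  refine (pow_le_pow_iff_left₀ (by positivity) (norm_nonneg y) two_ne_zero).mp ?_
  rw [mul_pow, EuclideanSpace.norm_sq_eq, EuclideanSpace.norm_sq_eq, Finset.mul_sum]
  gcongr with i
  rw [← mul_pow]
  exact pow_le_pow_left₀ (by positivity) (h i) 2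

namespace LinearMap.IsSymmetric

variable {𝕜 E : Type*} [RCLike 𝕜] [NormedAddCommGroup E] [InnerProductSpace 𝕜 E]
  [FiniteDimensional 𝕜 E] {T : E →ₗ[𝕜] E}

theorem eigenvectorBasis_repr_apply_sub_smul (hT : T.IsSymmetric) {n : ℕ}
    (hn : finrank 𝕜 E = n) (u : E) (μ : ℝ) (i : Fin n) :
    (hT.eigenvectorBasis hn).repr (T u - (μ : 𝕜) • u) i =
      ((hT.eigenvalues hn i - μ : ℝ) : 𝕜) * (hT.eigenvectorBasis hn).repr u i := by
  simp only [map_sub, map_smul, PiLp.sub_apply, PiLp.smul_apply, smul_eq_mul,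
    hT.eigenvectorBasis_apply_self_apply]
  ring

theorem exists_hasEigenvalue_abs_sub_mul_norm_le (hT : T.IsSymmetric) {u : E} (hu : u ≠ 0)
    (μ : ℝ) : ∃ lam : ℝ, HasEigenvalue T lam ∧ |lam - μ| * ‖u‖ ≤ ‖T u - (μ : 𝕜) • u‖ := by
  have : Nonempty (Fin (finrank 𝕜 E)) :=
    Fin.pos_iff_nonempty.mp (finrank_pos_iff_exists_ne_zero.mpr ⟨u, hu⟩)
  obtain ⟨i₀, -, hmin⟩ := Finset.univ.exists_min_image
    (fun i => |hT.eigenvalues rfl i - μ|) Finset.univ_nonempty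
  refine ⟨_, hT.hasEigenvalue_eigenvalues rfl i₀, ?_⟩
  let b := hT.eigenvectorBasis rfl
  rw [← b.repr.norm_map u, ← b.repr.norm_map]
  refine EuclideanSpace.mul_norm_le_norm_of_forall (abs_nonneg _) fun i => ?_
  rw [hT.eigenvectorBasis_repr_apply_sub_smul, norm_mul, RCLike.norm_ofReal]
  exact mul_le_mul_of_nonneg_right (hmin i (Finset.mem_univ i)) (norm_nonneg _)

end LinearMap.IsSymmetric

/-- Bauer–Fike for Hermitian matrices: for a Hermitian matrix `A`, a unit vector
`u` and a real number `μ`, there is a (real) eigenvalue `lam` of `A` with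
`|lam - μ| ≤ ‖A u - μ u‖`. -/
theorem stmt3 {n : ℕ} (A : Matrix (Fin n) (Fin n) ℂ) (hA : A.IsHermitian)
    (u : EuclideanSpace ℂ (Fin n)) (hu : ‖u‖ = 1) (μ : ℝ) :
    ∃ lam : ℝ,
      Module.End.HasEigenvalue
        (Matrix.toEuclideanLin A : Module.End ℂ (EuclideanSpace ℂ (Fin n))) (lam : ℂ) ∧
      |lam - μ| ≤ ‖Matrix.toEuclideanLin A u - (μ : ℂ) • u‖ := by
  have hu₀ : u ≠ 0 := norm_ne_zero_iff.mp (hu ▸ one_ne_zero)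
  obtain ⟨lam, hlam, hle⟩ :=
    (Matrix.isSymmetric_toEuclideanLin_iff.mpr hA).exists_hasEigenvalue_abs_sub_mul_norm_le hu₀ μ
  rw [hu, mul_one] at hle
  exact ⟨lam, hlam, hle⟩
end

section
/- For real numbers ρ > 0 and λ₁ ≤ λ₂ ≤ ⋯ ≤ λ_k, define g(η) = min over 1 ≤ j ≤ k of |η - λ_j|, and h(η) = η - 2ρ² / ( g(η) + sqrt( g(η)² + 4ρ² ) ). Then h : R → R is monotonically increasing. -/
/-- `gmin lam η = min_{1 ≤ j ≤ k} |η - lam j|`. -/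
noncomputable def gmin {k : ℕ} (lam : Fin k → ℝ) (η : ℝ) : ℝ :=
  ⨅ j : Fin k, |η - lam j|

lemma gmin_nonneg {k : ℕ} (hk : 0 < k) (lam : Fin k → ℝ) (η : ℝ) :
    0 ≤ gmin lam η := by
  haveI : Nonempty (Fin k) := ⟨⟨0, hk⟩⟩
  exact le_ciInf fun j => abs_nonneg _

lemma gmin_lip {k : ℕ} (hk : 0 < k) (lam : Fin k → ℝ) (η η' : ℝ) :
    gmin lam η' ≤ gmin lam η + |η' - η| := by
  haveI : Nonempty (Fin k) := ⟨⟨0, hk⟩⟩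
  have hb : BddBelow (Set.range fun j : Fin k => |η' - lam j|) :=
    ⟨0, by rintro x ⟨j, rfl⟩; exact abs_nonneg _⟩
  have h1 : gmin lam η' - |η' - η| ≤ gmin lam η := by
    refine le_ciInf fun j => ?_
    have h2 : gmin lam η' ≤ |η' - lam j| := ciInf_le hb j
    have h3 : |η' - lam j| ≤ |η - lam j| + |η' - η| := by
      have := abs_sub_abs_le_abs_sub (η' - lam j) (η - lam j)
      have h4 : |η' - lam j - (η - lam j)| = |η' - η| := by ring_nf
      linarith [abs_sub_abs_le_abs_sub (η' - lam j) (η - lam j), h4 ▸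
        abs_sub_abs_le_abs_sub (η' - lam j) (η - lam j)]
    linarith
  linarith

lemma sqrt_diff_le (c : ℝ) (x y : ℝ) (hy : 0 ≤ y) (hxy : y ≤ x) (hc : 0 ≤ c) :
    Real.sqrt (x ^ 2 + c) - Real.sqrt (y ^ 2 + c) ≤ x - y := by
  have hs : 0 ≤ Real.sqrt (y ^ 2 + c) := Real.sqrt_nonneg _
  have hys : y ≤ Real.sqrt (y ^ 2 + c) := by
    have : y = Real.sqrt (y ^ 2) := (Real.sqrt_sq hy).symm
    rw [this]
    exact Real.sqrt_le_sqrt (by nlinarith)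
  have hsq : Real.sqrt (y ^ 2 + c) ^ 2 = y ^ 2 + c :=
    Real.sq_sqrt (by positivity)
  have hle : Real.sqrt (x ^ 2 + c) ≤ x - y + Real.sqrt (y ^ 2 + c) := by
    have h1 : x ^ 2 + c ≤ (x - y + Real.sqrt (y ^ 2 + c)) ^ 2 := by nlinarith
    calc Real.sqrt (x ^ 2 + c) ≤ Real.sqrt ((x - y + Real.sqrt (y ^ 2 + c)) ^ 2) :=
          Real.sqrt_le_sqrt h1
      _ = x - y + Real.sqrt (y ^ 2 + c) := Real.sqrt_sq (by linarith)
  linarith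

/-- For `ρ > 0` and `lam 0 ≤ ⋯ ≤ lam (k-1)`, the function
`η ↦ η - 2ρ²/(g(η) + √(g(η)² + 4ρ²))` with `g(η) = min_j |η - lam j|`
is monotonically increasing. -/
theorem stmt12 {k : ℕ} (hk : 0 < k) (lam : Fin k → ℝ) (hmono : Monotone lam)
    (ρ : ℝ) (hρ : 0 < ρ) :
    Monotone (fun η : ℝ =>
      η - 2 * ρ ^ 2 /
        (gmin lam η + Real.sqrt ((gmin lam η) ^ 2 + 4 * ρ ^ 2))) := by
  intro a b hab
  simp only
  set g := gmin lam a with hg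
  set g' := gmin lam b with hg'
  have hg0 : 0 ≤ g := gmin_nonneg hk lam a
  have hg'0 : 0 ≤ g' := gmin_nonneg hk lam b
  -- Lipschitz bounds
  have hl1 : g' ≤ g + (b - a) := by
    have := gmin_lip hk lam a b
    rwa [abs_of_nonneg (by linarith : (0:ℝ) ≤ b - a)] at this
  have hl2 : g ≤ g' + (b - a) := by
    have := gmin_lip hk lam b a
    rwa [abs_of_nonpos (by linarith : a - b ≤ 0), neg_sub] at this
  set s := Real.sqrt (g ^ 2 + 4 * ρ ^ 2) with hs
  set s' := Real.sqrt (g' ^ 2 + 4 * ρ ^ 2) with hs'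
  have hssq : s ^ 2 = g ^ 2 + 4 * ρ ^ 2 := Real.sq_sqrt (by positivity)
  have hs'sq : s' ^ 2 = g' ^ 2 + 4 * ρ ^ 2 := Real.sq_sqrt (by positivity)
  have hspos : 0 < s := by
    have : 0 ≤ s := Real.sqrt_nonneg _
    nlinarith
  have hs'pos : 0 < s' := by
    have : 0 ≤ s' := Real.sqrt_nonneg _
    nlinarith
  have hden : 0 < g + s := by linarith
  have hden' : 0 < g' + s' := by linarith
  -- rationalize: 2ρ²/(g+s) = (s-g)/2
  have hr1 : 2 * ρ ^ 2 / (g + s) = (s - g) / 2 := by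
    rw [div_eq_div_iff hden.ne' (by norm_num : (2:ℝ) ≠ 0)]
    nlinarith
  have hr2 : 2 * ρ ^ 2 / (g' + s') = (s' - g') / 2 := by
    rw [div_eq_div_iff hden'.ne' (by norm_num : (2:ℝ) ≠ 0)]
    nlinarith
  rw [hr1, hr2]
  -- goal : a - (s-g)/2 ≤ b - (s'-g')/2, i.e. (s'-g') - (s-g) ≤ 2(b-a)
  have key : (s' - g') - (s - g) ≤ b - a := by
    rcases le_total g g' with h | h
    · -- g ≤ g' : f decreasing, so s' - g' ≤ s - g
      have := sqrt_diff_le (4 * ρ ^ 2) g' g hg0 h (by positivity)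
      linarith
    · -- g' ≤ g : s' ≤ s and g - g' ≤ b - a
      have hmon : s' ≤ s := Real.sqrt_le_sqrt (by nlinarith)
      linarith
  linarith
end

section
/- For real numbers ρ > 0 and a fixed real a, the function f(η) = min{a, η} - 2ρ² / ( |a - η| + sqrt( |a - η|² + 4ρ² ) ) is monotonically increasing in η. -/
lemma sqrt_sq_add_lipschitz (c u v : ℝ) (hc : 0 ≤ c) :
    Real.sqrt (u ^ 2 + c) - Real.sqrt (v ^ 2 + c) ≤ |u - v| := by
  set S := Real.sqrt (u ^ 2 + c) with hS
  set T := Real.sqrt (v ^ 2 + c) with hT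
  have hS0 : 0 ≤ S := Real.sqrt_nonneg _
  have hT0 : 0 ≤ T := Real.sqrt_nonneg _
  have hSsq : S ^ 2 = u ^ 2 + c := Real.sq_sqrt (by positivity)
  have hTsq : T ^ 2 = v ^ 2 + c := Real.sq_sqrt (by positivity)
  have hTv : |v| ≤ T := by
    rw [hT, ← Real.sqrt_sq_eq_abs]
    exact Real.sqrt_le_sqrt (by linarith)
  have h1 : v ≤ T := (le_abs_self v).trans hTv
  have h2 : -T ≤ v := by have := neg_abs_le v; linarith
  have habs : u - v ≤ |u - v| := le_abs_self _
  have h3 : v * (u - v) ≤ T * |u - v| := by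
    calc v * (u - v) ≤ |v * (u - v)| := le_abs_self _
    _ = |v| * |u - v| := abs_mul _ _
    _ ≤ T * |u - v| := mul_le_mul_of_nonneg_right hTv (abs_nonneg _)
  nlinarith [abs_nonneg (u - v), sq_abs (u - v), h3]

lemma rewrite_f (a ρ η : ℝ) (hρ : 0 < ρ) :
    min a η - 2 * ρ ^ 2 / (|a - η| + Real.sqrt (|a - η| ^ 2 + 4 * ρ ^ 2))
      = (a + η - Real.sqrt ((a - η) ^ 2 + 4 * ρ ^ 2)) / 2 := by
  set D := |a - η| with hD
  have hD0 : 0 ≤ D := abs_nonneg _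
  set S := Real.sqrt (D ^ 2 + 4 * ρ ^ 2) with hS
  have hSsq : S ^ 2 = D ^ 2 + 4 * ρ ^ 2 := Real.sq_sqrt (by positivity)
  have hSpos : 0 < S := by
    rw [hS]; exact Real.sqrt_pos.2 (by positivity)
  have hsum : 0 < D + S := by linarith
  have hdiv : 2 * ρ ^ 2 / (D + S) = (S - D) / 2 := by
    rw [div_eq_div_iff hsum.ne' two_ne_zero]
    nlinarith
  have hmin : min a η = (a + η - D) / 2 := by
    rcases le_total a η with h | h
    · rw [min_eq_left h, hD, abs_of_nonpos (by linarith)]; ring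
    · rw [min_eq_right h, hD, abs_of_nonneg (by linarith)]; ring
  have hsq : (a - η) ^ 2 = D ^ 2 := (sq_abs _).symm
  rw [hdiv, hmin, hsq, ← hS]
  ring

/-- For `ρ > 0` and fixed `a ∈ ℝ`, the function
`η ↦ min{a, η} - 2ρ²/(|a - η| + √(|a - η|² + 4ρ²))` is monotonically
increasing. -/
theorem stmt13 (a ρ : ℝ) (hρ : 0 < ρ) :
    Monotone (fun η : ℝ =>
      min a η - 2 * ρ ^ 2 /
        (|a - η| + Real.sqrt (|a - η| ^ 2 + 4 * ρ ^ 2))) := by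
  intro x y hxy
  simp only
  rw [rewrite_f a ρ x hρ, rewrite_f a ρ y hρ]
  have key : Real.sqrt ((a - y) ^ 2 + 4 * ρ ^ 2)
      - Real.sqrt ((a - x) ^ 2 + 4 * ρ ^ 2) ≤ |(a - y) - (a - x)| :=
    sqrt_sq_add_lipschitz (4 * ρ ^ 2) (a - y) (a - x) (by positivity)
  have habs : |(a - y) - (a - x)| = y - x := by
    rw [abs_of_nonpos (by linarith)]; ring
  rw [habs] at key
  linarith
end

section
/- Let A be an n×n Hermitian matrix and V ⊆ C^n a subspace with orthonormal basis matrix V. Let λ₁^V be the smallest eigenvalue of V* A V with unit eigenvector v, and set u = V v. Suppose γ̃ > 0 satisfies γ̃ ≤ λ_{m+1}(A) - λ₁(A) (a lower bound on the spectral gap, where m is the multiplicity of λ₁(A)), and suppose ℓ ≥ λ₁^V - λ₁(A) and r ≥ ||A u - λ₁^V u||. Then ||P^{W₁^⊥} u|| ≤ (ℓ + r)/γ̃, where W₁ is the eigenspace of λ₁(A). -/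
/-!
Expand `u` in an orthonormal eigenbasis of `A`. The part of `u` orthogonal to `W₁` only sees
eigenvalues at distance at least `γ̃` from `λ₁`, hence `γ̃ ‖P^{W₁^⊥} u‖ ≤ ‖A u - λ₁ u‖`.
As `μ = ⟪u, A u⟫` is a Rayleigh quotient of the unit vector `u`, `λ₁ ≤ μ`, and the triangle
inequality gives `‖A u - λ₁ u‖ ≤ ‖A u - μ u‖ + (μ - λ₁) ≤ r + ℓ`.
-/

open scoped Matrix InnerProductSpace
open Module.End RCLike

namespace LinearMap.IsSymmetric

variable {𝕜 E ι : Type*} [RCLike 𝕜] [NormedAddCommGroup E] [InnerProductSpace 𝕜 E] [Fintype ι]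
  {T : E →ₗ[𝕜] E}

theorem mem_orthogonal_eigenspace_of_mem_eigenspace (hT : T.IsSymmetric) {μ ν : 𝕜} {x : E}
    (hx : x ∈ eigenspace T μ) (hμν : μ ≠ ν) : x ∈ (eigenspace T ν)ᗮ :=
  Submodule.isOrtho_iff_le.mp (hT.orthogonalFamily_eigenspaces.isOrtho hμν) hx

variable (hT : T.IsSymmetric) (w : OrthonormalBasis ι 𝕜 E) {lam : ι → ℝ}
  (hw : ∀ i, T (w i) = (lam i : 𝕜) • w i)
include hT hw

theorem inner_apply_eq_of_eigenbasis (i : ι) (x : E) : ⟪w i, T x⟫_𝕜 = lam i * ⟪w i, x⟫_𝕜 := by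
  rw [← hT, hw, inner_smul_left, conj_ofReal]

theorem norm_apply_sub_smul_sq (t : ℝ) (x : E) :
    ‖T x - (t : 𝕜) • x‖ ^ 2 = ∑ i, (lam i - t) ^ 2 * ‖⟪w i, x⟫_𝕜‖ ^ 2 := by
  rw [← w.sum_sq_norm_inner_right]
  refine Finset.sum_congr rfl fun i _ => ?_
  rw [inner_sub_right, inner_smul_right, hT.inner_apply_eq_of_eigenbasis w hw, ← sub_mul,
    ← ofReal_sub, norm_mul, norm_ofReal, mul_pow, sq_abs]

theorem re_inner_self_apply_eq_sum (x : E) :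
    re ⟪x, T x⟫_𝕜 = ∑ i, lam i * ‖⟪w i, x⟫_𝕜‖ ^ 2 := by
  rw [← w.sum_inner_mul_inner x (T x), map_sum]
  refine Finset.sum_congr rfl fun i _ => ?_
  rw [hT.inner_apply_eq_of_eigenbasis w hw, mul_left_comm, ← inner_conj_symm, RCLike.conj_mul,
    re_ofReal_mul]
  norm_cast

theorem mul_norm_sq_le_re_inner_self_apply {t : ℝ} (ht : ∀ i, t ≤ lam i) (x : E) :
    t * ‖x‖ ^ 2 ≤ re ⟪x, T x⟫_𝕜 := by
  rw [hT.re_inner_self_apply_eq_sum w hw, ← w.sum_sq_norm_inner_right, Finset.mul_sum]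
  gcongr with i
  exact ht i

theorem mul_norm_orthogonalProjectionOnto_orthogonal_eigenspace_le [FiniteDimensional 𝕜 E]
    {t γ : ℝ} (hγ : 0 ≤ γ) (hgap : ∀ i, lam i ≠ t → γ ≤ |lam i - t|) (x : E) :
    γ * ‖(eigenspace T (t : 𝕜))ᗮ.orthogonalProjectionOnto x‖ ≤ ‖T x - (t : 𝕜) • x‖ := by
  set y := (eigenspace T (t : 𝕜))ᗮ.orthogonalProjectionOnto x
  refine le_of_pow_le_pow_left₀ two_ne_zero (norm_nonneg _) ?_
  rw [mul_pow, hT.norm_apply_sub_smul_sq w hw, Submodule.coe_norm y, ← w.sum_sq_norm_inner_right,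
    Finset.mul_sum]
  refine Finset.sum_le_sum fun i _ => ?_
  have hwi : w i ∈ eigenspace T (lam i : 𝕜) := by rw [mem_eigenspace_iff, hw]
  by_cases hi : lam i = t
  · rw [hi] at hwi
    rw [Submodule.inner_right_of_mem_orthogonal hwi y.2, norm_zero, zero_pow two_ne_zero,
      mul_zero]
    positivity
  · have hwi' := hT.mem_orthogonal_eigenspace_of_mem_eigenspace (ν := (t : 𝕜)) hwi
      (by exact_mod_cast hi)
    have hproj : ⟪w i, (y : E)⟫_𝕜 = ⟪w i, x⟫_𝕜 :=
      Submodule.inner_orthogonalProjectionOnto_eq_of_mem_left ⟨w i, hwi'⟩ x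
    rw [hproj, ← sq_abs (lam i - t)]
    gcongr
    exact hgap i hi

end LinearMap.IsSymmetric

theorem norm_apply_sub_smul_le_add {𝕜 E : Type*} [RCLike 𝕜] [NormedAddCommGroup E]
    [NormedSpace 𝕜 E] (T : E →ₗ[𝕜] E) (s t : ℝ) (x : E) :
    ‖T x - (s : 𝕜) • x‖ ≤ ‖T x - (t : 𝕜) • x‖ + |t - s| * ‖x‖ := by
  calc ‖T x - (s : 𝕜) • x‖ = ‖(T x - (t : 𝕜) • x) + ((t - s : ℝ) : 𝕜) • x‖ := by
        congr 1; push_cast; module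
    _ ≤ ‖T x - (t : 𝕜) • x‖ + |t - s| * ‖x‖ := by
        grw [norm_add_le, norm_smul, norm_ofReal]

namespace Matrix

variable {𝕜 m n : Type*} [RCLike 𝕜] [Fintype m] [DecidableEq m] [Fintype n] [DecidableEq n]

theorem inner_toEuclideanLin_conjTranspose_mul_mul (V : Matrix m n 𝕜) (A : Matrix m m 𝕜)
    (x y : EuclideanSpace 𝕜 n) :
    ⟪x, toEuclideanLin (Vᴴ * A * V) y⟫_𝕜 =
      ⟪toEuclideanLin V x, toEuclideanLin A (toEuclideanLin V y)⟫_𝕜 := by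
  rw [toLpLin_mul_same, toLpLin_mul_same, LinearMap.comp_apply, LinearMap.comp_apply,
    toEuclideanLin_conjTranspose_eq_adjoint, LinearMap.adjoint_inner_right]

theorem norm_toEuclideanLin_of_conjTranspose_mul_self (V : Matrix m n 𝕜) (hV : Vᴴ * V = 1)
    (x : EuclideanSpace 𝕜 n) : ‖toEuclideanLin V x‖ = ‖x‖ := by
  have h := inner_toEuclideanLin_conjTranspose_mul_mul V 1 x x
  simp only [Matrix.mul_one, hV, toLpLin_one, LinearMap.id_apply] at h
  rw [@norm_eq_sqrt_re_inner 𝕜, @norm_eq_sqrt_re_inner 𝕜 _ _ _ _ x, h]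

end Matrix

theorem stmt19_general {n r : ℕ} (hn : 0 < n)
    (A : Matrix (Fin n) (Fin n) ℂ) (hA : A.IsHermitian)
    (lam : Fin n → ℝ) (hmono : Monotone lam)
    (w : OrthonormalBasis (Fin n) ℂ (EuclideanSpace ℂ (Fin n)))
    (heig : ∀ i, Matrix.toEuclideanLin A (w i) = (lam i : ℂ) • w i)
    (m : ℕ) (hm : m < n)
    (hmul : ∀ i : Fin n, (i : ℕ) < m → lam i = lam ⟨0, hn⟩)
    (V : Matrix (Fin n) (Fin r) ℂ) (hV : Vᴴ * V = 1)
    (μ : ℝ) (v : EuclideanSpace ℂ (Fin r)) (hv : ‖v‖ = 1)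
    (hvec : Matrix.toEuclideanLin (Vᴴ * A * V) v = (μ : ℂ) • v)
    (γ ell res : ℝ) (hγ0 : 0 < γ)
    (hγ : γ ≤ lam ⟨m, hm⟩ - lam ⟨0, hn⟩)
    (hell : μ - lam ⟨0, hn⟩ ≤ ell)
    (hres : ‖Matrix.toEuclideanLin A (Matrix.toEuclideanLin V v) -
      (μ : ℂ) • Matrix.toEuclideanLin V v‖ ≤ res) :
    ‖Submodule.orthogonalProjectionOnto
        (Module.End.eigenspace
          (Matrix.toEuclideanLin A : Module.End ℂ (EuclideanSpace ℂ (Fin n)))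
          ((lam ⟨0, hn⟩ : ℝ) : ℂ))ᗮ
        (Matrix.toEuclideanLin V v)‖ ≤ (ell + res) / γ := by
  set T : EuclideanSpace ℂ (Fin n) →ₗ[ℂ] EuclideanSpace ℂ (Fin n) :=
    Matrix.toEuclideanLin A
  set u := Matrix.toEuclideanLin V v
  set lam₀ := lam ⟨0, hn⟩
  have hT : T.IsSymmetric := Matrix.isSymmetric_toEuclideanLin_iff.mpr hA
  have hu : ‖u‖ = 1 := (V.norm_toEuclideanLin_of_conjTranspose_mul_self hV v).trans hv
  have hμ : μ = re ⟪u, T u⟫_ℂ := by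
    have h := V.inner_toEuclideanLin_conjTranspose_mul_mul A v v
    rw [hvec, inner_smul_right, inner_self_eq_norm_sq_to_K, hv] at h
    rw [← h]
    simp
  have hμ₀ : lam₀ ≤ μ := by
    simpa [hu, hμ] using hT.mul_norm_sq_le_re_inner_self_apply w heig
      (fun i => hmono (Nat.zero_le i)) u
  have hgap : ∀ i, lam i ≠ lam₀ → γ ≤ |lam i - lam₀| := fun i hi => by
    have hmi : m ≤ i := by
      by_contra! h
      exact hi (hmul i h)
    have := hmono (show (⟨m, hm⟩ : Fin n) ≤ i from hmi)
    rw [abs_of_nonneg (by linarith)]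
    linarith
  rw [le_div_iff₀' hγ0]
  calc γ * ‖(eigenspace T (lam₀ : ℂ))ᗮ.orthogonalProjectionOnto u‖
      ≤ ‖T u - (lam₀ : ℂ) • u‖ :=
        hT.mul_norm_orthogonalProjectionOnto_orthogonal_eigenspace_le w heig hγ0.le hgap u
    _ ≤ ‖T u - (μ : ℂ) • u‖ + |μ - lam₀| * ‖u‖ := norm_apply_sub_smul_le_add T lam₀ μ u
    _ ≤ ell + res := by rw [hu, abs_of_nonneg (by linarith)]; linarith

/-- Computable-surrogate eigenspace error bound: let `A` be Hermitian with
eigenvalues `lam 0 ≤ ⋯ ≤ lam (n-1)` (orthonormal eigenbasis `w`), smallest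
eigenvalue `lam 0` of multiplicity `m` with eigenspace `W₁`, and spectral gap
`lam m - lam 0`.  Let `V` have orthonormal columns, `μ` be the smallest
eigenvalue of `V* A V` with unit eigenvector `v`, and `u = V v`.  If
`0 < γ ≤ lam m - lam 0`, `μ - lam 0 ≤ ell` and `‖A u - μ u‖ ≤ res`, then
`‖P^{W₁^⊥} u‖ ≤ (ell + res)/γ`. -/
theorem stmt19 {n r : ℕ} (hn : 0 < n)
    (A : Matrix (Fin n) (Fin n) ℂ) (hA : A.IsHermitian)
    (lam : Fin n → ℝ) (hmono : Monotone lam)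
    (w : OrthonormalBasis (Fin n) ℂ (EuclideanSpace ℂ (Fin n)))
    (heig : ∀ i, Matrix.toEuclideanLin A (w i) = (lam i : ℂ) • w i)
    (m : ℕ) (hm : m < n) (hm0 : 0 < m)
    (hmul : ∀ i : Fin n, (i : ℕ) < m → lam i = lam ⟨0, hn⟩)
    (hgap : lam ⟨0, hn⟩ < lam ⟨m, hm⟩)
    (V : Matrix (Fin n) (Fin r) ℂ) (hV : Vᴴ * V = 1)
    (μ : ℝ) (v : EuclideanSpace ℂ (Fin r)) (hv : ‖v‖ = 1)
    (hvec : Matrix.toEuclideanLin (Vᴴ * A * V) v = (μ : ℂ) • v)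
    (hsmallest : ∀ μ' : ℝ, Module.End.HasEigenvalue
      (Matrix.toEuclideanLin (Vᴴ * A * V) :
        Module.End ℂ (EuclideanSpace ℂ (Fin r))) (μ' : ℂ) → μ ≤ μ')
    (γ ell res : ℝ) (hγ0 : 0 < γ)
    (hγ : γ ≤ lam ⟨m, hm⟩ - lam ⟨0, hn⟩)
    (hell : μ - lam ⟨0, hn⟩ ≤ ell)
    (hres : ‖Matrix.toEuclideanLin A (Matrix.toEuclideanLin V v) -
      (μ : ℂ) • Matrix.toEuclideanLin V v‖ ≤ res) :
    ‖Submodule.orthogonalProjectionOnto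
        (Module.End.eigenspace
          (Matrix.toEuclideanLin A : Module.End ℂ (EuclideanSpace ℂ (Fin n)))
          ((lam ⟨0, hn⟩ : ℝ) : ℂ))ᗮ
        (Matrix.toEuclideanLin V v)‖ ≤ (ell + res) / γ :=
  stmt19_general hn A hA lam hmono w heig m hm hmul V hV μ v hv hvec γ ell res hγ0 hγ hell hres
end
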